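/- Let y ∈ (0,1), 0 < n̲ < n̄, and integers m ≥ 1, N ≥ 0, 0 ≤ s ≤ N. If y < s/(N + m − 1), then the likelihood ratio L(l) = p(l | y, n̄, m, s, N)/p(l | y, n̲, m, s, N) is strictly decreasing in l on {0,…,m}; that is, the Beta-Binomial distribution with strength n̲ dominates the one with strength n̄ in the monotone likelihood ratio order. -/
import Mathlib


/-- The Euler Beta function `B(a,b) = Γ(a)Γ(b)/Γ(a+b)`. -/
noncomputable def eulerBeta (a b : ℝ) : ℝ := Real.Gamma a * Real.Gamma b / Real.Gamma (a + b)

/-- The Beta-Binomial probability mass function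
`p(l ∣ y, n, m, s, N) = C(m,l) · B(l + ny + s, m − l + n(1−y) + N − s) / B(ny + s, n(1−y) + N − s)`. -/
noncomputable def bbPmf (y n : ℝ) (m s N : ℕ) (l : ℕ) : ℝ :=
  (m.choose l : ℝ) *
    eulerBeta ((l : ℝ) + n * y + s) ((m : ℝ) - l + n * (1 - y) + N - s) /
    eulerBeta (n * y + s) (n * (1 - y) + N - s)

lemma eulerBeta_pos {a b : ℝ} (ha : 0 < a) (hb : 0 < b) : 0 < eulerBeta a b := by
  unfold eulerBeta
  exact div_pos (mul_pos (Real.Gamma_pos_of_pos ha) (Real.Gamma_pos_of_pos hb))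
    (Real.Gamma_pos_of_pos (by linarith))

lemma eulerBeta_succ {u v : ℝ} (hu : 0 < u) (hv : 0 < v) :
    eulerBeta (u + 1) v * v = eulerBeta u (v + 1) * u := by
  unfold eulerBeta
  rw [Real.Gamma_add_one hu.ne', Real.Gamma_add_one hv.ne',
    show u + 1 + v = u + v + 1 from by ring, show u + (v + 1) = u + v + 1 from by ring]
  ring

lemma bbPmf_pos {y n : ℝ} {m s N l : ℕ} (hy0 : 0 < y) (hy1 : y < 1) (hn : 0 < n)
    (hsN : s ≤ N) (hl : l ≤ m) : 0 < bbPmf y n m s N l := by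
  have h1 : 0 < n * y := mul_pos hn hy0
  have h2 : 0 < n * (1 - y) := mul_pos hn (by linarith)
  have h3 : (0:ℝ) ≤ l := Nat.cast_nonneg l
  have h4 : (0:ℝ) ≤ s := Nat.cast_nonneg s
  have h5 : (l:ℝ) ≤ m := by exact_mod_cast hl
  have h6 : (s:ℝ) ≤ N := by exact_mod_cast hsN
  have hc : (0:ℝ) < m.choose l := by exact_mod_cast Nat.choose_pos hl
  exact div_pos (mul_pos hc (eulerBeta_pos (by linarith) (by linarith)))
    (eulerBeta_pos (by linarith) (by linarith))

lemma bbPmf_step {y n : ℝ} {m s N l : ℕ} (hy0 : 0 < y) (hy1 : y < 1) (hn : 0 < n)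
    (hsN : s ≤ N) (hl : l < m) :
    bbPmf y n m s N (l + 1) * ((l:ℝ) + 1) * ((m:ℝ) - ((l:ℝ) + 1) + n * (1 - y) + N - s) =
      bbPmf y n m s N l * ((m:ℝ) - l) * ((l:ℝ) + n * y + s) := by
  have h1 : 0 < n * y := mul_pos hn hy0
  have h2 : 0 < n * (1 - y) := mul_pos hn (by linarith)
  have h3 : (0:ℝ) ≤ l := Nat.cast_nonneg l
  have h4 : (0:ℝ) ≤ s := Nat.cast_nonneg s
  have h5 : ((l:ℝ) + 1) ≤ m := by exact_mod_cast hl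
  have h6 : (s:ℝ) ≤ N := by exact_mod_cast hsN
  have hu : (0:ℝ) < (l:ℝ) + n * y + s := by linarith
  have hv : (0:ℝ) < (m:ℝ) - ((l:ℝ) + 1) + n * (1 - y) + N - s := by linarith
  have hc : (m.choose (l + 1) : ℝ) * ((l:ℝ) + 1) = (m.choose l : ℝ) * ((m:ℝ) - l) := by
    have := Nat.choose_succ_right_eq m l
    have h' := congrArg (Nat.cast (R := ℝ)) this
    push_cast [Nat.cast_sub hl.le] at h'
    linarith [h']
  have hB := eulerBeta_succ hu hv
  unfold bbPmf
  push_cast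
  rw [show (l:ℝ) + 1 + n * y + (s:ℝ) = ((l:ℝ) + n * y + s) + 1 from by ring,
    show (m:ℝ) - (l:ℝ) + n * (1 - y) + (N:ℝ) - s
      = ((m:ℝ) - ((l:ℝ) + 1) + n * (1 - y) + N - s) + 1 from by ring]
  set u := (l:ℝ) + n * y + s
  set v := (m:ℝ) - ((l:ℝ) + 1) + n * (1 - y) + N - s
  set B0 := eulerBeta (n * y + s) (n * (1 - y) + (N:ℝ) - s)
  calc (m.choose (l+1) : ℝ) * eulerBeta (u + 1) v / B0 * ((l:ℝ) + 1) * v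
      = (eulerBeta (u + 1) v * v) * ((m.choose (l+1) : ℝ) * ((l:ℝ) + 1)) / B0 := by ring
    _ = (eulerBeta u (v + 1) * u) * ((m.choose (l+1) : ℝ) * ((l:ℝ) + 1)) / B0 := by rw [hB]
    _ = (eulerBeta u (v + 1) * u) * ((m.choose l : ℝ) * ((m:ℝ) - l)) / B0 := by rw [hc]
    _ = (m.choose l : ℝ) * eulerBeta u (v + 1) / B0 * ((m:ℝ) - l) * u := by ring

/-- If `y < s/(N + m − 1)` then the likelihood ratio
`L(l) = p(l ∣ y, n̄, m, s, N)/p(l ∣ y, n̲, m, s, N)` is strictly decreasing in `l` on `{0, …, m}`: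
the Beta-Binomial distribution with strength `n̲` dominates the one with strength `n̄` in the
monotone likelihood ratio order. -/
theorem bbPmf_lr_strictAnti_strength (y nlo nhi : ℝ) (m s N : ℕ)
    (hy0 : 0 < y) (hy1 : y < 1) (hn0 : 0 < nlo) (hn : nlo < nhi)
    (hm : 1 ≤ m) (hsN : s ≤ N)
    (hcond : y < (s : ℝ) / ((N : ℝ) + m - 1)) :
    ∀ l₁ l₂ : ℕ, l₁ < l₂ → l₂ ≤ m →
      bbPmf y nhi m s N l₂ / bbPmf y nlo m s N l₂ <
        bbPmf y nhi m s N l₁ / bbPmf y nlo m s N l₁ := by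
  have hnhi : 0 < nhi := hn0.trans hn
  have hm' : (1:ℝ) ≤ m := by exact_mod_cast hm
  have hN' : (0:ℝ) ≤ N := Nat.cast_nonneg N
  have hys : y * ((N:ℝ) + m - 1) < s := by
    rcases lt_or_eq_of_le (show (0:ℝ) ≤ (N:ℝ) + m - 1 by linarith) with hD | hD
    · exact (lt_div_iff₀ hD).mp hcond
    · rw [← hD, div_zero] at hcond; linarith
  have key : ∀ l, l < m →
      bbPmf y nhi m s N (l + 1) / bbPmf y nlo m s N (l + 1) <
        bbPmf y nhi m s N l / bbPmf y nlo m s N l := by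
    intro l hl
    have h3 : (0:ℝ) ≤ l := Nat.cast_nonneg l
    have h4 : (0:ℝ) ≤ s := Nat.cast_nonneg s
    have h5 : ((l:ℝ) + 1) ≤ m := by exact_mod_cast hl
    have h6 : (s:ℝ) ≤ N := by exact_mod_cast hsN
    have hPhi := bbPmf_pos (n := nhi) (l := l) hy0 hy1 hnhi hsN hl.le
    have hPlo := bbPmf_pos (n := nlo) (l := l) hy0 hy1 hn0 hsN hl.le
    have hPhi' := bbPmf_pos (n := nhi) (l := l + 1) hy0 hy1 hnhi hsN hl
    have hPlo' := bbPmf_pos (n := nlo) (l := l + 1) hy0 hy1 hn0 hsN hl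
    have Shi := bbPmf_step (n := nhi) (l := l) hy0 hy1 hnhi hsN hl
    have Slo := bbPmf_step (n := nlo) (l := l) hy0 hy1 hn0 hsN hl
    rw [div_lt_div_iff₀ hPlo' hPlo]
    set uhi := (l:ℝ) + nhi * y + s with huhi
    set ulo := (l:ℝ) + nlo * y + s with hulo
    set vhi := (m:ℝ) - ((l:ℝ) + 1) + nhi * (1 - y) + N - s with hvhi
    set vlo := (m:ℝ) - ((l:ℝ) + 1) + nlo * (1 - y) + N - s with hvlo
    have huhip : 0 < uhi := by have := mul_pos hnhi hy0; rw [huhi]; linarith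
    have hulop : 0 < ulo := by have := mul_pos hn0 hy0; rw [hulo]; linarith
    have hvhip : 0 < vhi := by have := mul_pos hnhi (show (0:ℝ) < 1 - y by linarith); rw [hvhi]; linarith
    have hvlop : 0 < vlo := by have := mul_pos hn0 (show (0:ℝ) < 1 - y by linarith); rw [hvlo]; linarith
    have hkey : uhi * vlo < ulo * vhi := by
      have hid : ulo * vhi - uhi * vlo
          = (nhi - nlo) * ((l:ℝ) + (s:ℝ) - y * ((N:ℝ) + m - 1)) := by
        rw [huhi, hulo, hvhi, hvlo]; ring
      have hp : 0 < (nhi - nlo) * ((l:ℝ) + (s:ℝ) - y * ((N:ℝ) + m - 1)) :=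
        mul_pos (by linarith) (by linarith)
      linarith
    have hA : (0:ℝ) < bbPmf y nhi m s N l * bbPmf y nlo m s N l * ((m:ℝ) - l) * ((l:ℝ) + 1) :=
      mul_pos (mul_pos (mul_pos hPhi hPlo) (by linarith)) (by linarith)
    have hK : (0:ℝ) ≤ (((l:ℝ) + 1) * vhi) * (((l:ℝ) + 1) * vlo) := by positivity
    refine lt_of_mul_lt_mul_right ?_ hK
    calc bbPmf y nhi m s N (l + 1) * bbPmf y nlo m s N l * ((((l:ℝ) + 1) * vhi) * (((l:ℝ) + 1) * vlo))
        = (bbPmf y nhi m s N (l + 1) * ((l:ℝ) + 1) * vhi)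
            * (bbPmf y nlo m s N l * (((l:ℝ) + 1) * vlo)) := by ring
      _ = (bbPmf y nhi m s N l * ((m:ℝ) - l) * uhi)
            * (bbPmf y nlo m s N l * (((l:ℝ) + 1) * vlo)) := by rw [Shi]
      _ = (bbPmf y nhi m s N l * bbPmf y nlo m s N l * ((m:ℝ) - l) * ((l:ℝ) + 1))
            * (uhi * vlo) := by ring
      _ < (bbPmf y nhi m s N l * bbPmf y nlo m s N l * ((m:ℝ) - l) * ((l:ℝ) + 1))
            * (ulo * vhi) := by exact mul_lt_mul_of_pos_left hkey hA
      _ = (bbPmf y nlo m s N l * ((m:ℝ) - l) * ulo)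
            * (bbPmf y nhi m s N l * (((l:ℝ) + 1) * vhi)) := by ring
      _ = (bbPmf y nlo m s N (l + 1) * ((l:ℝ) + 1) * vlo)
            * (bbPmf y nhi m s N l * (((l:ℝ) + 1) * vhi)) := by rw [Slo]
      _ = bbPmf y nhi m s N l * bbPmf y nlo m s N (l + 1)
            * ((((l:ℝ) + 1) * vhi) * (((l:ℝ) + 1) * vlo)) := by ring
  intro l₁ l₂
  induction l₂ with
  | zero => intro h _; exact absurd h (Nat.not_lt_zero _)
  | succ k ih =>
    intro h12 h2m
    have hkm : k < m := h2m
    rcases Nat.lt_succ_iff_lt_or_eq.mp h12 with h | h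
    · exact (key k hkm).trans (ih h hkm.le)
    · subst h; exact key l₁ hkm
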